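/- In Berlinkov's automaton A(ψ), if ψ is not satisfiable, then for every word v ∈ {a,b}* of length n and every letter d ∈ {a, b, c}, the state q_{m+1,1} belongs to δ(T, v·d), where T = {q_{i,1} : 1 ≤ i ≤ m+1}. -/
import Mathlib


/-- The three-letter alphabet {a, b, c}. -/
inductive Letter3 where
  | a | b | c
deriving DecidableEq

/-- Extension of a transition function to words (left-to-right action). -/
def runW {Q A : Type*} (δ : Q → A → Q) : Q → List A → Q
  | q, [] => q
  | q, x :: w => runW δ (δ q x) w

/-- States of Berlinkov's automaton A(ψ) for a SAT instance with m clauses and n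
variables.  `q i j` encodes q_{i+1,j+1} (so `q ⟨m⟩ ⟨n⟩` is the state z₁),
`p i j` encodes p_{i+1,j+1}, and `z0` is the zero state. -/
inductive St (m n : ℕ) where
  | q : Fin (m + 1) → Fin (n + 1) → St m n
  | p : Fin (m + 1) → Fin (n + 1) → St m n
  | z0 : St m n
deriving DecidableEq

/-- The transition function of Berlinkov's automaton A(ψ).  `pos i j` means the
literal x_{j+1} occurs in clause c_{i+1}; `neg i j` means ¬x_{j+1} occurs there. -/
def St.delta {m n : ℕ} (pos neg : Fin m → Fin n → Bool) : St m n → Letter3 → St m n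
  | .q i j, .a =>
      if hj : (j : ℕ) < n then
        if hi : (i : ℕ) < m then
          if pos ⟨i, hi⟩ ⟨j, hj⟩ then .z0 else .q i ⟨(j : ℕ) + 1, by omega⟩
        else .q i ⟨(j : ℕ) + 1, by omega⟩
      else if (i : ℕ) < m then .z0 else .q i ⟨0, by omega⟩
  | .q i j, .b =>
      if hj : (j : ℕ) < n then
        if hi : (i : ℕ) < m then
          if neg ⟨i, hi⟩ ⟨j, hj⟩ then .z0 else .q i ⟨(j : ℕ) + 1, by omega⟩
        else .q i ⟨(j : ℕ) + 1, by omega⟩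
      else if (i : ℕ) < m then .z0 else .q i ⟨0, by omega⟩
  | .q i j, .c =>
      if (j : ℕ) < n then .q i ⟨0, by omega⟩
      else if (i : ℕ) < m then .q ⟨m, by omega⟩ ⟨0, by omega⟩ else .z0
  | .p i j, x =>
      if hj : (j : ℕ) < n then .p i ⟨(j : ℕ) + 1, by omega⟩
      else match x with
        | .c => .q i ⟨0, by omega⟩
        | _ => .z0
  | .z0, _ => .z0

/-- Clause c_{i+1} is satisfied by the truth assignment τ. -/
def clauseSat {m n : ℕ} (pos neg : Fin m → Fin n → Bool) (τ : Fin n → Bool) (i : Fin m) : Prop :=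
  ∃ j : Fin n, (pos i j = true ∧ τ j = true) ∨ (neg i j = true ∧ τ j = false)

/-- The word v(τ) ∈ {a,b}ⁿ encoding a truth assignment. -/
def encWord {n : ℕ} (τ : Fin n → Bool) : List Letter3 :=
  List.ofFn fun j : Fin n => if τ j then Letter3.a else Letter3.b


lemma runW_append {Q A : Type*} (δ : Q → A → Q) (q : Q) (u w : List A) :
    runW δ q (u ++ w) = runW δ (runW δ q u) w := by
  induction u generalizing q <;> simp [runW, *]

lemma run_aux {m n : ℕ} (pos neg : Fin m → Fin n → Bool) (i : Fin (m + 1))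
    (w : List Letter3) (hc : Letter3.c ∉ w) (j : ℕ) (hjn : j + w.length ≤ n)
    (hsafe : ∀ k (hk : k < w.length) (hj' : j + k < n) (hi : (i : ℕ) < m),
      (w.get ⟨k, hk⟩ = .a → pos ⟨i, hi⟩ ⟨j + k, hj'⟩ = false) ∧
      (w.get ⟨k, hk⟩ = .b → neg ⟨i, hi⟩ ⟨j + k, hj'⟩ = false)) :
    runW (St.delta pos neg) (St.q i ⟨j, by omega⟩) w
      = St.q i ⟨j + w.length, by omega⟩ := by
  induction w generalizing j with
  | nil => simp [runW]
  | cons x w ih =>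
    simp only [List.mem_cons, not_or] at hc
    have hjlt : j < n := by simp at hjn; omega
    have hstep : St.delta pos neg (St.q i ⟨j, by omega⟩) x
        = St.q i ⟨j + 1, by omega⟩ := by
      rcases x with _ | _ | _
      · by_cases hi : (i : ℕ) < m
        · have := (hsafe 0 (by simp) (by omega) hi).1 rfl
          simp only [Nat.add_zero] at this
          simp [St.delta, hjlt, hi, this]
        · simp [St.delta, hjlt, hi]
      · by_cases hi : (i : ℕ) < m
        · have := (hsafe 0 (by simp) (by omega) hi).2 rfl
          simp only [Nat.add_zero] at this
          simp [St.delta, hjlt, hi, this]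
        · simp [St.delta, hjlt, hi]
      · exact absurd rfl hc.1
    have hrec := ih hc.2 (j + 1) (by simp at hjn ⊢; omega)
      (fun k hk hj' hi => by
        have := hsafe (k + 1) (by simp; omega) (by omega) hi
        simpa [Nat.add_assoc, Nat.add_comm 1 k] using this)
    have : runW (St.delta pos neg) (St.q i ⟨j, by omega⟩) (x :: w)
        = runW (St.delta pos neg) (St.q i ⟨j + 1, by omega⟩) w := by
      simp [runW, hstep]
    rw [this, hrec]
    exact congrArg _ (Fin.ext (by simp; omega))

/-- If ψ is not satisfiable then for every word v ∈ {a,b}* of length n and every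
letter d, the state q_{m+1,1} belongs to the image of T = {q_{i,1} : 1 ≤ i ≤ m+1}
under v·d. -/
theorem unsat_qm1_in_image
    {m n : ℕ} (pos neg : Fin m → Fin n → Bool)
    (hunsat : ∀ τ : Fin n → Bool, ∃ i : Fin m, ¬ clauseSat pos neg τ i)
    (v : List Letter3) (hv : v.length = n) (hab : Letter3.c ∉ v) (d : Letter3) :
    ∃ i₀ : Fin (m + 1),
      runW (St.delta pos neg) (St.q i₀ ⟨0, Nat.succ_pos n⟩) (v ++ [d])
        = St.q ⟨m, Nat.lt_succ_self m⟩ ⟨0, Nat.succ_pos n⟩ := by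
  simp only [runW_append]
  rcases d with _ | _ | _
  · refine ⟨⟨m, Nat.lt_succ_self m⟩, ?_⟩
    have h := run_aux pos neg ⟨m, Nat.lt_succ_self m⟩ v hab 0 (by omega)
      (fun k hk hj' hi => absurd hi (by simp))
    rw [h]
    simp [runW, St.delta, hv]
  · refine ⟨⟨m, Nat.lt_succ_self m⟩, ?_⟩
    have h := run_aux pos neg ⟨m, Nat.lt_succ_self m⟩ v hab 0 (by omega)
      (fun k hk hj' hi => absurd hi (by simp))
    rw [h]
    simp [runW, St.delta, hv]
  · obtain ⟨i, hi⟩ := hunsat (fun j => decide (v.get (j.cast hv.symm) = Letter3.a))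
    refine ⟨i.castSucc, ?_⟩
    unfold clauseSat at hi
    push_neg at hi
    have h := run_aux pos neg i.castSucc v hab 0 (by omega)
      (fun k hk hj' hi' => ?_)
    · rw [h]
      simp [runW, St.delta, hv, i.isLt]
    · have hki : (⟨(i.castSucc : ℕ), hi'⟩ : Fin m) = i := Fin.ext (by simp)
      have hcl := hi ⟨0 + k, hj'⟩
      have hget : v.get (Fin.cast hv.symm ⟨0 + k, hj'⟩) = v.get ⟨k, hk⟩ :=
        congrArg v.get (Fin.ext (by simp))
      rw [hki]
      constructor
      · intro ha
        by_contra hp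
        rw [Bool.not_eq_false] at hp
        have := hcl.1 hp
        rw [hget] at this
        rw [List.get_eq_getElem] at ha
        simp [ha] at this
      · intro hb
        by_contra hp
        rw [Bool.not_eq_false] at hp
        have := hcl.2 hp
        rw [hget] at this
        rw [List.get_eq_getElem] at hb
        simp [hb] at this
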